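/- Let (M,g,J,ω,∇) be an affine special Kähler manifold with Levi-Civita connection D and S := g^{-1}∇g. Then the Riemann curvature operator of D is given by R(X,Y) = −(1/4)[S_X, S_Y] (commutator of endomorphisms of TM) for all vector fields X, Y. -/
import Mathlib


universe u v

/-- Abstract calculus of vector fields on a manifold: `F` models the ring of smooth
functions (an `ℝ`-algebra), `X` the `F`-module of vector fields, with Lie bracket
`br` and the action `act` of vector fields on functions as derivations. -/
structure VFCalc (F : Type u) (X : Type v) [CommRing F] [Algebra ℝ F]
    [AddCommGroup X] [Module F X] where
  br : X → X → X
  act : X → F → F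
  act_add : ∀ v f g, act v (f + g) = act v f + act v g
  act_mul : ∀ v f g, act v (f * g) = f * act v g + g * act v f
  act_const : ∀ v (r : ℝ), act v (algebraMap ℝ F r) = 0
  act_addl : ∀ v w f, act (v + w) f = act v f + act w f
  act_smull : ∀ (h : F) v f, act (h • v) f = h * act v f
  br_antisymm : ∀ v w, br v w = -br w v
  br_jacobi : ∀ u v w, br u (br v w) + br v (br w u) + br w (br u v) = 0
  act_br : ∀ v w f, act (br v w) f = act v (act w f) - act w (act v f)

/-- An affine special (pseudo-)Kähler manifold, modelled abstractly: a pseudo-Kähler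
structure `(g, J, ω = g(J·,·))` together with a flat torsion-free connection `conn = ∇`
satisfying `∇ω = 0` and `d^∇ J = 0`. -/
structure ASK (F : Type u) (X : Type v) [CommRing F] [Algebra ℝ F]
    [AddCommGroup X] [Module F X] extends VFCalc F X where
  g : X → X → F
  J : X → X
  conn : X → X → X
  g_symm : ∀ v w, g v w = g w v
  g_addl : ∀ u v w, g (u + v) w = g u w + g v w
  g_smull : ∀ (f : F) v w, g (f • v) w = f * g v w
  g_nondeg : ∀ v, (∀ w, g v w = 0) → v = 0
  J_add : ∀ v w, J (v + w) = J v + J w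
  J_smul : ∀ (f : F) v, J (f • v) = f • J v
  J_sq : ∀ v, J (J v) = -v
  g_hermitian : ∀ v w, g (J v) (J w) = g v w
  conn_addl : ∀ u v w, conn (u + v) w = conn u w + conn v w
  conn_smull : ∀ (f : F) v w, conn (f • v) w = f • conn v w
  conn_addr : ∀ u v w, conn u (v + w) = conn u v + conn u w
  conn_leibniz : ∀ u (f : F) v, conn u (f • v) = act u f • v + f • conn u v
  torsion_free : ∀ v w, conn v w - conn w v = br v w
  flat : ∀ u v w, conn u (conn v w) - conn v (conn u w) - conn (br u v) w = 0
  dconnJ : ∀ v w, conn v (J w) - J (conn v w) = conn w (J v) - J (conn w v)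
  conn_omega : ∀ u v w,
    act u (g (J v) w) - g (J (conn u v)) w - g (J v) (conn u w) = 0

namespace ASK

variable {F : Type u} {X : Type v} [CommRing F] [Algebra ℝ F]
  [AddCommGroup X] [Module F X]

/-- The covariant derivative `(∇_u g)(v, w)` of the metric. -/
def covg (A : ASK F X) (u v w : X) : F :=
  A.act u (A.g v w) - A.g (A.conn u v) w - A.g v (A.conn u w)

/-- The second covariant derivative `(∇²_{u,v} g)(z, w)`. -/
def covg2 (A : ASK F X) (u v z w : X) : F :=
  A.act u (A.covg v z w) - A.covg (A.conn u v) z w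
    - A.covg v (A.conn u z) w - A.covg v z (A.conn u w)

end ASK

/-- A conical affine special Kähler (CASK) manifold: an ASK manifold together with
its Levi-Civita connection `lc = D` and a vector field `xi = ξ` satisfying
`D ξ = ∇ ξ = id`. -/
structure CASK (F : Type u) (X : Type v) [CommRing F] [Algebra ℝ F]
    [AddCommGroup X] [Module F X] extends ASK F X where
  lc : X → X → X
  lc_metric : ∀ u v w, act u (g v w) = g (lc u v) w + g v (lc u w)
  lc_torsion_free : ∀ v w, lc v w - lc w v = br v w
  xi : X
  lc_xi : ∀ v, lc v xi = v
  conn_xi : ∀ v, conn v xi = v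


namespace ASKAux

universe u' v'

variable {F : Type u'} {X : Type v'} [CommRing F] [Algebra ℝ F]
  [AddCommGroup X] [Module F X] (A : ASK F X)

lemma g_zerol (w : X) : A.g 0 w = 0 := by
  have := A.g_smull 0 0 w; simpa using this

lemma g_negl (v w : X) : A.g (-v) w = -A.g v w := by
  have := A.g_smull (-1) v w; simpa using this

lemma g_subl (u v w : X) : A.g (u - v) w = A.g u w - A.g v w := by
  rw [sub_eq_add_neg, A.g_addl, g_negl, sub_eq_add_neg]

lemma g_addr (u v w : X) : A.g u (v + w) = A.g u v + A.g u w := by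
  rw [A.g_symm, A.g_addl, A.g_symm v u, A.g_symm w u]

lemma g_smulr (f : F) (v w : X) : A.g v (f • w) = f * A.g v w := by
  rw [A.g_symm, A.g_smull, A.g_symm]

lemma g_negr (v w : X) : A.g v (-w) = -A.g v w := by
  rw [A.g_symm, g_negl, A.g_symm]

lemma g_subr (u v w : X) : A.g u (v - w) = A.g u v - A.g u w := by
  rw [A.g_symm, g_subl, A.g_symm v u, A.g_symm w u]

lemma g_zeror (v : X) : A.g v 0 = 0 := by
  rw [A.g_symm, g_zerol]

lemma act_zero (v : X) : A.act v (0 : F) = 0 := by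
  have := A.act_const v 0; simpa using this

lemma act_neg (v : X) (f : F) : A.act v (-f) = -A.act v f := by
  have h := A.act_add v f (-f)
  simp [act_zero] at h
  linear_combination -h

lemma act_sub (v : X) (f g : F) : A.act v (f - g) = A.act v f - A.act v g := by
  rw [sub_eq_add_neg, A.act_add, act_neg, sub_eq_add_neg]

lemma act_zerol (f : F) : A.act 0 f = 0 := by
  have := A.act_smull 0 0 f; simpa using this

lemma act_negl (v : X) (f : F) : A.act (-v) f = -A.act v f := by
  have := A.act_smull (-1) v f; simpa using this

lemma act_subl (u v : X) (f : F) : A.act (u - v) f = A.act u f - A.act v f := by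
  rw [sub_eq_add_neg, A.act_addl, act_negl, sub_eq_add_neg]

lemma conn_zeror (u : X) : A.conn u 0 = 0 := by
  have := A.conn_leibniz u 0 0; simpa using this

lemma conn_negr (u v : X) : A.conn u (-v) = -A.conn u v := by
  have h := A.conn_leibniz u (-1) v
  have h1 : A.act u (-1 : F) = 0 := by
    have := A.act_const u (-1); simpa using this
  rw [h1] at h; simpa using h

lemma conn_subr (u v w : X) : A.conn u (v - w) = A.conn u v - A.conn u w := by
  rw [sub_eq_add_neg, A.conn_addr, conn_negr, sub_eq_add_neg]

lemma conn_zerol (v : X) : A.conn 0 v = 0 := by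
  have := A.conn_smull 0 0 v; simpa using this

lemma conn_negl (u v : X) : A.conn (-u) v = -A.conn u v := by
  have := A.conn_smull (-1) u v; simpa using this

lemma conn_subl (u v w : X) : A.conn (u - v) w = A.conn u w - A.conn v w := by
  rw [sub_eq_add_neg, A.conn_addl, conn_negl, sub_eq_add_neg]

lemma conn_smulc (r : ℝ) (u v : X) :
    A.conn u ((algebraMap ℝ F r) • v) = (algebraMap ℝ F r) • A.conn u v := by
  rw [A.conn_leibniz, A.act_const, zero_smul, zero_add]

lemma J_neg (v : X) : A.J (-v) = -A.J v := by
  have := A.J_smul (-1) v; simpa using this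

lemma J_sub (v w : X) : A.J (v - w) = A.J v - A.J w := by
  rw [sub_eq_add_neg, A.J_add, J_neg, sub_eq_add_neg]

end ASKAux
namespace ASKAux

variable {F : Type u'} {X : Type v'} [CommRing F] [Algebra ℝ F]
  [AddCommGroup X] [Module F X] (A : ASK F X)

lemma covg_symm23 (u v w : X) : A.covg u v w = A.covg u w v := by
  simp only [ASK.covg]
  rw [A.g_symm v w, A.g_symm (A.conn u v) w, A.g_symm v (A.conn u w)]
  ring

lemma covg_symm12 (u v w : X) : A.covg u v w = A.covg v u w := by
  have key : ∀ a b : X, A.covg a b w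
      = - A.g (A.J (A.conn a (A.J b) - A.J (A.conn a b))) w := by
    intro a b
    have h := A.conn_omega a (A.J b) w
    rw [A.J_sq b] at h
    rw [g_negl, act_neg, g_negl] at h
    -- h : -(act a (g b w)) - g (J (conn a (J b))) w - (- g b (conn a w)) = 0
    have hJJ : A.g (A.J (A.J (A.conn a b))) w = - A.g (A.conn a b) w := by
      rw [A.J_sq, g_negl]
    simp only [ASK.covg, J_sub, g_subl]
    linear_combination -h - hJJ
  rw [key u v, key v u, A.dconnJ u v]

lemma covg_addl (u u' v w : X) :
    A.covg (u + u') v w = A.covg u v w + A.covg u' v w := by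
  simp only [ASK.covg, A.act_addl, A.conn_addl, A.g_addl, g_addr]
  ring

lemma covg_smull (f : F) (u v w : X) :
    A.covg (f • u) v w = f * A.covg u v w := by
  simp only [ASK.covg, A.act_smull, A.conn_smull, A.g_smull, g_smulr]
  ring

lemma covg_negl (u v w : X) : A.covg (-u) v w = -A.covg u v w := by
  have := covg_smull A (-1) u v w; simpa using this

lemma covg_subl (u u' v w : X) :
    A.covg (u - u') v w = A.covg u v w - A.covg u' v w := by
  rw [sub_eq_add_neg, covg_addl, covg_negl, sub_eq_add_neg]

lemma covg_addm (u v v' w : X) :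
    A.covg u (v + v') w = A.covg u v w + A.covg u v' w := by
  simp only [ASK.covg, A.g_addl, A.act_add, A.conn_addr]
  ring

lemma covg_smulm (f : F) (u v w : X) :
    A.covg u (f • v) w = f * A.covg u v w := by
  simp only [ASK.covg, A.g_smull, A.act_mul, A.conn_leibniz, A.g_addl]
  ring

lemma covg_br (u v w y : X) :
    A.covg (A.br u v) w y = A.covg (A.conn u v) w y - A.covg (A.conn v u) w y := by
  rw [← covg_subl, A.torsion_free]

end ASKAux
namespace ASKAux

variable {F : Type u'} {X : Type v'} [CommRing F] [Algebra ℝ F]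
  [AddCommGroup X] [Module F X] (A : ASK F X)

lemma ricci (u v z w : X) : A.covg2 u v z w = A.covg2 v u z w := by
  have h1 : A.act u (A.act v (A.g z w)) - A.act v (A.act u (A.g z w))
      = A.act (A.br u v) (A.g z w) := (A.act_br u v (A.g z w)).symm
  have h2 : A.act (A.conn u v) (A.g z w) - A.act (A.conn v u) (A.g z w)
      = A.act (A.br u v) (A.g z w) := by
    rw [← act_subl, A.torsion_free]
  have h3 : A.g (A.conn (A.conn u v) z) w - A.g (A.conn (A.conn v u) z) w
      = A.g (A.conn (A.br u v) z) w := by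
    rw [← g_subl, ← conn_subl, A.torsion_free]
  have h4 : A.g (A.conn u (A.conn v z)) w - A.g (A.conn v (A.conn u z)) w
      = A.g (A.conn (A.br u v) z) w := by
    have := congrArg (fun x => A.g x w) (A.flat u v z)
    simp only [g_subl, g_zerol] at this
    linear_combination this
  have h5 : A.g z (A.conn (A.conn u v) w) - A.g z (A.conn (A.conn v u) w)
      = A.g z (A.conn (A.br u v) w) := by
    rw [← g_subr, ← conn_subl, A.torsion_free]
  have h6 : A.g z (A.conn u (A.conn v w)) - A.g z (A.conn v (A.conn u w))
      = A.g z (A.conn (A.br u v) w) := by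
    have := congrArg (fun x => A.g z x) (A.flat u v w)
    simp only [g_subr, g_zeror] at this
    linear_combination this
  simp only [ASK.covg2, ASK.covg, act_sub]
  linear_combination h1 - h2 + h3 - h4 + h5 - h6

end ASKAux
namespace ASKAux

variable {F : Type u'} {X : Type v'} [CommRing F] [Algebra ℝ F]
  [AddCommGroup X] [Module F X] (A : ASK F X)

lemma eq_of_g (x y : X) (h : ∀ w, A.g x w = A.g y w) : x = y := by
  have h0 : ∀ w, A.g (x - y) w = 0 := by
    intro w; rw [g_subl, h w, sub_self]
  have := A.g_nondeg _ h0
  exact sub_eq_zero.mp this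

variable (S : X → X → X) (hS : ∀ u v w, A.g (S u v) w = A.covg u v w)
include hS

lemma S_symm (u v : X) : S u v = S v u :=
  eq_of_g A _ _ (fun w => by rw [hS, hS, covg_symm12])

lemma S_addr (u v v' : X) : S u (v + v') = S u v + S u v' :=
  eq_of_g A _ _ (fun w => by rw [hS, A.g_addl, hS, hS, covg_addm])

lemma S_smulr (f : F) (u v : X) : S u (f • v) = f • S u v :=
  eq_of_g A _ _ (fun w => by rw [hS, A.g_smull, hS, covg_smulm])

lemma S_subl (u u' v : X) : S (u - u') v = S u v - S u' v :=
  eq_of_g A _ _ (fun w => by rw [hS, g_subl, hS, hS, covg_subl])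

/-- key identity: the ∇-derivative of S antisymmetrized equals -[S_u,S_v]. -/
lemma keyM (u v w : X) :
    A.conn u (S v w) - A.conn v (S u w) + S u (A.conn v w) - S v (A.conn u w)
      - S (A.br u v) w
    = -(S u (S v w) - S v (S u w)) := by
  apply eq_of_g A
  intro y
  have hconnS : ∀ a b c : X, A.g (A.conn a (S b c)) y
      = A.act a (A.covg b c y) - A.covg b c (A.conn a y) - A.g (S a (S b c)) y := by
    intro a b c
    have hdef : A.covg a (S b c) y
        = A.act a (A.g (S b c) y) - A.g (A.conn a (S b c)) y
          - A.g (S b c) (A.conn a y) := rfl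
    rw [hS b c y, hS b c (A.conn a y)] at hdef
    rw [← hS a (S b c) y] at hdef
    linear_combination hdef
  have hr := ricci A u v w y
  have hbr : A.g (S (A.br u v) w) y
      = A.covg (A.conn u v) w y - A.covg (A.conn v u) w y := by
    rw [hS, covg_br]
  simp only [g_subl, A.g_addl, g_negl]
  rw [hconnS u v w, hconnS v u w, hS u (A.conn v w) y, hS v (A.conn u w) y, hbr]
  simp only [ASK.covg2] at hr
  linear_combination hr

end ASKAux
namespace ASKAux

variable {F : Type u'} {X : Type v'} [CommRing F] [Algebra ℝ F]
  [AddCommGroup X] [Module F X] (A : ASK F X)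

lemma koszul (E : X → X → X)
    (hmet : ∀ u v w, A.act u (A.g v w) = A.g (E u v) w + A.g v (E u w))
    (htf : ∀ v w, E v w - E w v = A.br v w) (u v w : X) :
    A.g (E u v) w + A.g (E u v) w
      = A.act u (A.g v w) + A.act v (A.g w u) - A.act w (A.g u v)
        + A.g (A.br u v) w - A.g v (A.br u w) - A.g u (A.br v w) := by
  have h1 := hmet u v w
  have h2 := hmet v w u
  have h3 := hmet w u v
  have b1 : A.g (A.br u v) w = A.g (E u v) w - A.g (E v u) w := by
    rw [← g_subl, htf]
  have b2 : A.g v (A.br u w) = A.g v (E u w) - A.g v (E w u) := by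
    rw [← g_subr, htf]
  have b3 : A.g u (A.br v w) = A.g u (E v w) - A.g u (E w v) := by
    rw [← g_subr, htf]
  have s1 : A.g (E v w) u = A.g u (E v w) := A.g_symm _ _
  have s2 : A.g w (E v u) = A.g (E v u) w := A.g_symm _ _
  have s3 : A.g v (E w u) = A.g (E w u) v := A.g_symm _ _
  have s4 : A.g (E w u) v = A.g v (E w u) := A.g_symm _ _
  linear_combination -h1 - h2 + h3 - b1 + b2 + b3 - s1 - s2 - s3

lemma half_cancel (x : F) (h : x + x = 0) : x = 0 := by
  have h2 : (algebraMap ℝ F 2) * x = 0 := by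
    have : (algebraMap ℝ F 2) = (2 : F) := by
      rw [map_ofNat]
    rw [this, two_mul, h]
  have := congrArg (fun t => (algebraMap ℝ F (1/2 : ℝ)) * t) h2
  simp only [← mul_assoc, ← map_mul] at this
  norm_num at this
  exact this

end ASKAux

/-- On an ASK manifold, the Riemann curvature of the Levi-Civita
connection `D` is `R(X,Y) = -(1/4)[S_X, S_Y]`. -/
theorem ASK_curvature {F : Type u} {X : Type v} [CommRing F]
    [Algebra ℝ F] [AddCommGroup X] [Module F X] (A : ASK F X)
    (S : X → X → X) (hS : ∀ u v w, A.g (S u v) w = A.covg u v w)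
    (D : X → X → X)
    (hDmetric : ∀ u v w, A.act u (A.g v w) = A.g (D u v) w + A.g v (D u w))
    (hDtf : ∀ v w, D v w - D w v = A.br v w) :
    ∀ u v w, D u (D v w) - D v (D u w) - D (A.br u v) w
      = -((algebraMap ℝ F (1/4 : ℝ)) • (S u (S v w) - S v (S u w))) := by
  open ASKAux in
  set c : F := algebraMap ℝ F (1/2 : ℝ) with hc
  set D' : X → X → X := fun u v => A.conn u v + c • S u v with hD'
  have hcc1 : c + c = 1 := by rw [hc, ← map_add]; norm_num
  -- D' is metric
  have hmet' : ∀ u v w, A.act u (A.g v w) = A.g (D' u v) w + A.g v (D' u w) := by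
    intro u v w
    show A.act u (A.g v w)
      = A.g (A.conn u v + c • S u v) w + A.g v (A.conn u w + c • S u w)
    rw [A.g_addl, ASKAux.g_addr, A.g_smull, ASKAux.g_smulr]
    have h1 : A.g (S u v) w = A.covg u v w := hS u v w
    have h2 : A.g v (S u w) = A.covg u v w := by
      rw [A.g_symm, hS, ASKAux.covg_symm23]
    have hcov : A.covg u v w
        = A.act u (A.g v w) - A.g (A.conn u v) w - A.g v (A.conn u w) := rfl
    linear_combination -c * h1 - c * h2 - hcov - A.covg u v w * hcc1
  -- D' is torsion-free
  have htf' : ∀ v w, D' v w - D' w v = A.br v w := by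
    intro v w
    show A.conn v w + c • S v w - (A.conn w v + c • S w v) = A.br v w
    rw [ASKAux.S_symm A S hS v w, ← A.torsion_free]
    abel
  -- uniqueness via Koszul: D = D'
  have hDD' : ∀ u v, D u v = D' u v := by
    intro u v
    apply ASKAux.eq_of_g A
    intro w
    have k1 := ASKAux.koszul A D hDmetric hDtf u v w
    have k2 := ASKAux.koszul A D' hmet' htf' u v w
    have hsum : (A.g (D u v) w - A.g (D' u v) w)
        + (A.g (D u v) w - A.g (D' u v) w) = 0 := by
      linear_combination k1 - k2
    have := ASKAux.half_cancel _ hsum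
    linear_combination this
  have hDf : D = D' := funext fun u => funext fun v => hDD' u v
  intro u v w
  rw [hDf]
  show A.conn u (D' v w) + c • S u (D' v w)
      - (A.conn v (D' u w) + c • S v (D' u w))
      - (A.conn (A.br u v) w + c • S (A.br u v) w)
    = -((algebraMap ℝ F (1/4 : ℝ)) • (S u (S v w) - S v (S u w)))
  have hDvw : D' v w = A.conn v w + c • S v w := rfl
  have hDuw : D' u w = A.conn u w + c • S u w := rfl
  rw [hDvw, hDuw]
  rw [A.conn_addr u, A.conn_addr v, hc, ASKAux.conn_smulc, ASKAux.conn_smulc,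
    ASKAux.S_addr A S hS, ASKAux.S_addr A S hS,
    ASKAux.S_smulr A S hS, ASKAux.S_smulr A S hS]
  -- flat : conn (br u v) w = ...
  have hflat : A.conn (A.br u v) w
      = A.conn u (A.conn v w) - A.conn v (A.conn u w) := by
    have h := A.flat u v w
    rw [sub_sub, sub_eq_zero] at h
    rw [h]; abel
  have hM : S (A.br u v) w
      = A.conn u (S v w) - A.conn v (S u w) + S u (A.conn v w)
        - S v (A.conn u w) + (S u (S v w) - S v (S u w)) := by
    have h := ASKAux.keyM A S hS u v w
    have h0 : (A.conn u (S v w) - A.conn v (S u w) + S u (A.conn v w)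
        - S v (A.conn u w) - S (A.br u v) w) + (S u (S v w) - S v (S u w)) = 0 := by
      rw [h]; abel
    rw [← sub_eq_zero]
    have hre : S (A.br u v) w - (A.conn u (S v w) - A.conn v (S u w)
          + S u (A.conn v w) - S v (A.conn u w) + (S u (S v w) - S v (S u w)))
        = -((A.conn u (S v w) - A.conn v (S u w) + S u (A.conn v w)
          - S v (A.conn u w) - S (A.br u v) w) + (S u (S v w) - S v (S u w))) := by
      abel
    rw [hre, h0, neg_zero]
  rw [hflat, hM]
  have key2 : ∀ (K : X), (algebraMap ℝ F (1/2 : ℝ)) • ((algebraMap ℝ F (1/2 : ℝ)) • K)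
      - (algebraMap ℝ F (1/2 : ℝ)) • K = -((algebraMap ℝ F (1/4 : ℝ)) • K) := by
    intro K
    rw [smul_smul, ← map_mul, ← neg_smul, ← map_neg, ← sub_smul, ← map_sub]
    norm_num
  rw [← key2 (S u (S v w) - S v (S u w))]
  module
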